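/- arXiv:1706.05648 — 2 statements merged into one kernel-verified Lean document; each statement's English description precedes it below -/
import Mathlib

section
/- Fix a finite set A of cardinality at least 2, a vector θ⁰ and a nonzero vector θ¹ in ℝ^N with bounded entries, and a family of distinct feature vectors f(a) ∈ ℝ^N for a ∈ A such that the map a ↦ (θ¹)ᵀ f(a) is not constant. Then the function t ↦ -(θ⁰ + tθ¹)ᵀ f(x) + log(Σ_{a∈A} exp((θ⁰ + tθ¹)ᵀ f(a))) has strictly positive second derivative at every t ∈ ℝ, for any fixed x ∈ A. -/
/-!
Along the line, the loss is an affine function of `s` plus the log-partition function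
`log ∑ₐ exp (b a + s d a)` with `b a = θ⁰ ⬝ᵥ f a`, `d a = θ¹ ⬝ᵥ f a`. Its second derivative is
the variance of `d` under the Gibbs weights `eₐ = exp (b a + s d a)`. By the Lagrange identity
this variance equals `∑ₐ ∑_b eₐ e_b (dₐ - d_b)² / (2 (∑ₐ eₐ)²)`, which is positive as soon as `d`
is not constant.
-/

open Finset Real

section
variable {A : Type*} [Fintype A]

lemma sum_sum_mul_mul_sub_sq (e d : A → ℝ) :
    ∑ a, ∑ b, e a * e b * (d a - d b) ^ 2
      = 2 * ((∑ a, e a * d a ^ 2) * ∑ a, e a - (∑ a, e a * d a) ^ 2) := by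
  set X : A → A → ℝ := fun a b => e a * d a ^ 2 * e b - e a * d a * (e b * d b)
  calc ∑ a, ∑ b, e a * e b * (d a - d b) ^ 2 = ∑ a, ∑ b, (X a b + X b a) := by
        refine sum_congr rfl fun a _ => sum_congr rfl fun b _ => ?_
        simp only [X]; ring
    _ = 2 * ∑ a, ∑ b, X a b := by
        simp only [sum_add_distrib]
        rw [sum_comm (f := fun a b => X b a)]
        ring
    _ = _ := by
        simp only [X, sq, sum_mul_sum, ← sum_sub_distrib]

lemma sq_sum_mul_lt_sum_mul_sq_mul_sum {e d : A → ℝ} (he : ∀ a, 0 < e a) {a₀ b₀ : A}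
    (hd : d a₀ ≠ d b₀) :
    (∑ a, e a * d a) ^ 2 < (∑ a, e a * d a ^ 2) * ∑ a, e a := by
  have hpos : 0 < ∑ a, ∑ b, e a * e b * (d a - d b) ^ 2 := by
    refine sum_pos' (fun a _ => sum_nonneg fun b _ => by have := he a; have := he b; positivity)
      ⟨a₀, mem_univ _, sum_pos' (fun b _ => by have := he a₀; have := he b; positivity)
        ⟨b₀, mem_univ _, ?_⟩⟩
    have := sub_ne_zero.mpr hd
    have := he a₀; have := he b₀
    positivity
  rw [sum_sum_mul_mul_sub_sq] at hpos
  linarith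

noncomputable def expMoment (b d : A → ℝ) (k : ℕ) (s : ℝ) : ℝ :=
  ∑ a, exp (b a + s * d a) * d a ^ k

lemma hasDerivAt_expMoment (b d : A → ℝ) (k : ℕ) (s : ℝ) :
    HasDerivAt (expMoment b d k) (expMoment b d (k + 1) s) s := by
  unfold expMoment
  refine HasDerivAt.fun_sum fun a _ => ?_
  exact (((hasDerivAt_mul_const (d a)).const_add (b a)).exp.mul_const (d a ^ k)).congr_deriv
    (by ring)

lemma expMoment_zero_pos [Nonempty A] (b d : A → ℝ) (s : ℝ) : 0 < expMoment b d 0 s :=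
  sum_pos (fun a _ => by simpa using exp_pos _) univ_nonempty

lemma deriv_neg_affine_add_log_expMoment [Nonempty A] (b d : A → ℝ) (c e : ℝ) :
    deriv (fun s => -(c + s * e) + log (expMoment b d 0 s))
      = fun s => -e + expMoment b d 1 s / expMoment b d 0 s := by
  funext s
  have hlin : HasDerivAt (fun s => -(c + s * e)) (-e) s :=
    ((hasDerivAt_mul_const e).const_add c).neg
  exact (hlin.add ((hasDerivAt_expMoment b d 0 s).log (expMoment_zero_pos b d s).ne')).deriv

lemma iteratedDeriv_two_neg_affine_add_log_expMoment [Nonempty A] (b d : A → ℝ) (c e t : ℝ) :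
    iteratedDeriv 2 (fun s => -(c + s * e) + log (expMoment b d 0 s)) t
      = (expMoment b d 2 t * expMoment b d 0 t - expMoment b d 1 t ^ 2)
          / expMoment b d 0 t ^ 2 := by
  rw [iteratedDeriv_succ, iteratedDeriv_one, deriv_neg_affine_add_log_expMoment]
  have := ((hasDerivAt_expMoment b d 1 t).div (hasDerivAt_expMoment b d 0 t)
    (expMoment_zero_pos b d t).ne').const_add (-e)
  exact this.deriv.trans (by norm_num [sq])

lemma expMoment_sq_lt {b d : A → ℝ} {a₀ b₀ : A} (hd : d a₀ ≠ d b₀) (s : ℝ) :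
    expMoment b d 1 s ^ 2 < expMoment b d 2 s * expMoment b d 0 s := by
  simpa [expMoment] using
    sq_sum_mul_lt_sum_mul_sq_mul_sum (e := fun a => exp (b a + s * d a)) (fun a => exp_pos _) hd

end

theorem stmt_3_general {A : Type*} [Fintype A] (N : ℕ)
    (θ0 θ1 : Fin N → ℝ)
    (f : A → Fin N → ℝ)
    (hnc : ∃ a b : A, (∑ i, θ1 i * f a i) ≠ (∑ i, θ1 i * f b i))
    (x : A) (t : ℝ) :
    0 < iteratedDeriv 2
      (fun s => -(∑ i, (θ0 i + s * θ1 i) * f x i) +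
        Real.log (∑ a : A, Real.exp (∑ i, (θ0 i + s * θ1 i) * f a i))) t := by
  obtain ⟨a₀, b₀, hd⟩ := hnc
  have : Nonempty A := ⟨a₀⟩
  have hline : ∀ (s : ℝ) (a : A),
      ∑ i, (θ0 i + s * θ1 i) * f a i = θ0 ⬝ᵥ f a + s * θ1 ⬝ᵥ f a := fun s a => by
    simp only [dotProduct, add_mul, sum_add_distrib, mul_sum, mul_assoc]
  have hloss : (fun s => -(∑ i, (θ0 i + s * θ1 i) * f x i) +
        log (∑ a : A, exp (∑ i, (θ0 i + s * θ1 i) * f a i)))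
      = fun s => -(θ0 ⬝ᵥ f x + s * θ1 ⬝ᵥ f x) +
        log (expMoment (fun a => θ0 ⬝ᵥ f a) (fun a => θ1 ⬝ᵥ f a) 0 s) := by
    simp only [hline, expMoment, pow_zero, mul_one]
  rw [hloss, iteratedDeriv_two_neg_affine_add_log_expMoment]
  have := expMoment_sq_lt (b := fun a => θ0 ⬝ᵥ f a) (d := fun a => θ1 ⬝ᵥ f a) hd t
  have := expMoment_zero_pos (fun a => θ0 ⬝ᵥ f a) (fun a => θ1 ⬝ᵥ f a) t
  exact div_pos (by linarith) (by positivity)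

/-- The multinomial logistic loss restricted to any line `θ⁰ + t θ¹` along which
the linear payoffs are not all equal has strictly positive second derivative
everywhere. -/
theorem stmt_3 {A : Type*} [Fintype A] (hA : 2 ≤ Fintype.card A) (N : ℕ)
    (θ0 θ1 : Fin N → ℝ) (hθ1 : θ1 ≠ 0)
    (f : A → Fin N → ℝ) (hf : Function.Injective f)
    (hnc : ∃ a b : A, (∑ i, θ1 i * f a i) ≠ (∑ i, θ1 i * f b i))
    (x : A) (t : ℝ) :
    0 < iteratedDeriv 2
      (fun s => -(∑ i, (θ0 i + s * θ1 i) * f x i) +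
        Real.log (∑ a : A, Real.exp (∑ i, (θ0 i + s * θ1 i) * f a i))) t :=
  stmt_3_general N θ0 θ1 f hnc x t
end

section
/- Consider the p-player polymatrix game with pure-strategy sets [m] for each player, an influential set I ⊂ [p] with |I| = d ≥ 2, fixed strategies a ∈ [m]^I for influential players (not all equal), payoffs u^{i,i}(x_i) = 1{x_i = a_i} for i ∈ I, u^{j,j}(x_j) = 1/(2x_j) for j ∉ I, and u^{j,i}(x_j, x_i) = 1{x_j = x_i} for i ∈ I, j ∉ I, with the game graph being the complete bipartite graph from I to I^c. Then the game has a unique pure-strategy Nash equilibrium: each influential player i plays a_i, and each non-influential player plays Maj(a), the majority strategy in a (ties broken by the numerically smallest strategy). -/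
/-- The hard-to-learn polymatrix game from the lower-bound construction has a
unique pure-strategy Nash equilibrium: influential players `i ∈ I` play `a i`,
and every non-influential player plays the majority strategy `Maj(a)` (ties
broken by the numerically smallest strategy). -/
theorem stmt_16 (p m d : ℕ) (hd : 2 ≤ d)
    (I : Finset (Fin p)) (hI : I.card = d)
    (a : Fin p → Fin m)
    (hne : ∃ i ∈ I, ∃ j ∈ I, a i ≠ a j)
    -- total payoffs of the constructed polymatrix game
    (u : Fin p → (Fin p → Fin m) → ℝ)
    (hu : ∀ i x, u i x =
      if i ∈ I then (if x i = a i then 1 else 0)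
      else 1 / (2 * ((x i : ℕ) + 1 : ℝ)) +
        ∑ k ∈ I, (if x i = x k then (1 : ℝ) else 0))
    -- count of influential players playing strategy b
    (count : Fin m → ℕ)
    (hcount : ∀ b, count b = (I.filter fun i => a i = b).card) :
    ∃ x : Fin p → Fin m,
      (∀ i ∈ I, x i = a i) ∧
      (∀ j ∉ I,
        (∀ b : Fin m, count b ≤ count (x j)) ∧
        (∀ b : Fin m, count b = count (x j) → x j ≤ b)) ∧
      (∀ (i : Fin p) (b : Fin m), u i (Function.update x i b) ≤ u i x) ∧
      (∀ y : Fin p → Fin m,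
        (∀ (i : Fin p) (b : Fin m), u i (Function.update y i b) ≤ u i y) →
        y = x) := by
  obtain ⟨i0, hi0, -, -, -⟩ := hne
  -- m is positive
  have hm : 0 < m := (a i0).pos
  -- the majority strategy M
  have hSne : (Finset.univ.filter (fun b : Fin m => ∀ c, count c ≤ count b)).Nonempty := by
    obtain ⟨b, -, hb⟩ := Finset.exists_max_image (Finset.univ : Finset (Fin m)) count
      ⟨a i0, Finset.mem_univ _⟩
    exact ⟨b, Finset.mem_filter.mpr ⟨Finset.mem_univ _, fun c => hb c (Finset.mem_univ c)⟩⟩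
  set S := Finset.univ.filter (fun b : Fin m => ∀ c, count c ≤ count b) with hS
  set M := S.min' hSne with hMdef
  have hM1 : ∀ b, count b ≤ count M :=
    (Finset.mem_filter.mp (S.min'_mem hSne)).2
  have hM2 : ∀ b, count b = count M → M ≤ b := by
    intro b hb
    exact S.min'_le b (Finset.mem_filter.mpr ⟨Finset.mem_univ _, fun c => hb ▸ hM1 c⟩)
  -- the equilibrium profile
  set x : Fin p → Fin m := fun i => if i ∈ I then a i else M with hx
  have hxI : ∀ i ∈ I, x i = a i := fun i hi => by simp [hx, hi]
  have hxO : ∀ j ∉ I, x j = M := fun j hj => by simp [hx, hj]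
  -- payoff formula for non-influential players
  have key : ∀ (y : Fin p → Fin m) (j : Fin p), j ∉ I → (∀ k ∈ I, y k = a k) →
      u j y = 1 / (2 * ((y j : ℕ) + 1 : ℝ)) + (count (y j) : ℝ) := by
    intro y j hj hy
    rw [hu, if_neg hj]
    congr 1
    calc ∑ k ∈ I, (if y j = y k then (1:ℝ) else 0)
        = ∑ k ∈ I, (if a k = y j then (1:ℝ) else 0) :=
          Finset.sum_congr rfl (fun k hk => by
            rw [hy k hk]; exact if_congr eq_comm rfl rfl)
      _ = ((I.filter fun k => a k = y j).card : ℝ) := by rw [Finset.sum_boole]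
      _ = (count (y j) : ℝ) := by rw [hcount]
  -- positivity/bounds of the tie-breaking term
  have ftpos : ∀ c : Fin m, (0:ℝ) < 1 / (2 * ((c : ℕ) + 1 : ℝ)) := by
    intro c; positivity
  have fthalf : ∀ c : Fin m, 1 / (2 * ((c : ℕ) + 1 : ℝ)) ≤ 1/2 := by
    intro c
    rw [div_le_div_iff₀ (by positivity) (by norm_num)]
    have : (0:ℝ) ≤ ((c:ℕ):ℝ) := Nat.cast_nonneg _
    nlinarith
  -- monotonicity: M is the unique best response
  have best : ∀ b : Fin m, b ≠ M →
      1 / (2 * ((b : ℕ) + 1 : ℝ)) + (count b : ℝ) <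
      1 / (2 * ((M : ℕ) + 1 : ℝ)) + (count M : ℝ) := by
    intro b hb
    rcases lt_or_eq_of_le (hM1 b) with h | h
    · have h1 : (count b : ℝ) + 1 ≤ (count M : ℝ) := by exact_mod_cast h
      have := fthalf b
      have := ftpos M
      linarith
    · have hMb : M ≤ b := hM2 b h
      have hMb' : M < b := lt_of_le_of_ne hMb (Ne.symm hb)
      have hlt : 1 / (2 * ((b : ℕ) + 1 : ℝ)) < 1 / (2 * ((M : ℕ) + 1 : ℝ)) := by
        have : ((M:ℕ):ℝ) < ((b:ℕ):ℝ) := by exact_mod_cast (Fin.lt_def.mp hMb')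
        apply one_div_lt_one_div_of_lt (by positivity)
        linarith
      rw [h]; linarith
  refine ⟨x, hxI, ?_, ?_, ?_⟩
  · intro j hj
    rw [hxO j hj]
    exact ⟨hM1, hM2⟩
  · -- x is an equilibrium
    intro i b
    by_cases hi : i ∈ I
    · rw [hu, hu, if_pos hi, if_pos hi, Function.update_self, if_pos (hxI i hi)]
      split <;> norm_num
    · have h1 : u i x = 1 / (2 * ((M : ℕ) + 1 : ℝ)) + (count M : ℝ) := by
        have h := key x i hi hxI
        rw [hxO i hi] at h
        exact h
      have h2 : u i (Function.update x i b) =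
          1 / (2 * ((b : ℕ) + 1 : ℝ)) + (count b : ℝ) := by
        rw [key (Function.update x i b) i hi]
        · rw [Function.update_self]
        · intro k hk
          rw [Function.update_of_ne (show k ≠ i by rintro rfl; exact hi hk), hxI k hk]
      rw [h1, h2]
      by_cases hbM : b = M
      · rw [hbM]
      · exact le_of_lt (best b hbM)
  · -- uniqueness
    intro y hy
    have hyI : ∀ i ∈ I, y i = a i := by
      intro i hi
      have := hy i (a i)
      rw [hu, hu, if_pos hi, if_pos hi, Function.update_self, if_pos rfl] at this
      by_contra h
      rw [if_neg h] at this
      norm_num at this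
    funext j
    by_cases hj : j ∈ I
    · rw [hyI j hj, hxI j hj]
    · rw [hxO j hj]
      by_contra hne'
      have hdev := hy j M
      rw [key y j hj hyI, key (Function.update y j M) j hj ?_] at hdev
      · rw [Function.update_self] at hdev
        exact absurd hdev (not_le.mpr (best (y j) hne'))
      · intro k hk
        rw [Function.update_of_ne (show k ≠ j by rintro rfl; exact hj hk), hyI k hk]
end
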